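/- (Support reduction when the optimal approximate design is exact.) Let n ≥ m be an integer and let w*∞ be a D-optimal approximate design with invertible information matrix M_* that is itself an exact design of size n, and assume max_{i∈{1,…,N}} v*_i = m. Then every support index ℓ of every D-optimal exact design of size n satisfies v*_ℓ = m. -/

import Mathlib

open Matrix BigOperators

/-- An approximate design: nonnegative weights summing to one. -/
def IsDesign {N : ℕ} (w : Fin N → ℝ) : Prop :=
  (∀ i, 0 ≤ w i) ∧ ∑ i, w i = 1

/-- An exact design of size `n`: an approximate design with `n * w i` an integer for all `i`. -/
def IsExactDesign {N : ℕ} (n : ℕ) (w : Fin N → ℝ) : Prop :=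
  IsDesign w ∧ ∀ i, ∃ z : ℤ, (n : ℝ) * w i = (z : ℝ)

/-- The information matrix `M(w) = ∑ i, w i • f i (f i)ᵀ`. -/
noncomputable def infoMatrix {N m : ℕ} (f : Fin N → Fin m → ℝ) (w : Fin N → ℝ) :
    Matrix (Fin m) (Fin m) ℝ :=
  ∑ i, w i • vecMulVec (f i) (f i)

/-- The D-criterion `Φ(M) = det(M)^(1/m)`. -/
noncomputable def Dcrit {m : ℕ} (M : Matrix (Fin m) (Fin m) ℝ) : ℝ :=
  M.det ^ ((1 : ℝ) / (m : ℝ))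

/-- A D-optimal approximate design. -/
def IsDOptimalApprox {N m : ℕ} (f : Fin N → Fin m → ℝ) (w : Fin N → ℝ) : Prop :=
  IsDesign w ∧ ∀ w' : Fin N → ℝ, IsDesign w' →
    Dcrit (infoMatrix f w') ≤ Dcrit (infoMatrix f w)

/-- A D-optimal exact design of size `n`. -/
def IsDOptimalExact {N m : ℕ} (f : Fin N → Fin m → ℝ) (n : ℕ) (w : Fin N → ℝ) : Prop :=
  IsExactDesign n w ∧ ∀ w' : Fin N → ℝ, IsExactDesign n w' →
    Dcrit (infoMatrix f w') ≤ Dcrit (infoMatrix f w)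

/-- The variance function `v_i(w) = f iᵀ M(w)⁻¹ f i`. -/
noncomputable def varfun {N m : ℕ} (f : Fin N → Fin m → ℝ) (w : Fin N → ℝ) (i : Fin N) : ℝ :=
  f i ⬝ᵥ (infoMatrix f w)⁻¹ *ᵥ f i

section Aux
variable {m : ℕ}

lemma psd_vecMulVec (u : Fin m → ℝ) : (vecMulVec u u).PosSemidef := by
  rw [posSemidef_iff_dotProduct_mulVec]
  constructor
  · ext i j
    simp [conjTranspose_apply, vecMulVec_apply, mul_comm]
  · intro x
    have h : vecMulVec u u *ᵥ x = (u ⬝ᵥ x) • u := by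
      ext i
      simp only [mulVec, vecMulVec_apply, dotProduct, Pi.smul_apply, smul_eq_mul]
      rw [Finset.sum_mul]
      exact Finset.sum_congr rfl fun k _ => by ring
    rw [h, dotProduct_smul, star_trivial]
    have : x ⬝ᵥ u = u ⬝ᵥ x := dotProduct_comm x u
    rw [smul_eq_mul, this]
    exact mul_self_nonneg _

lemma psd_smul {A : Matrix (Fin m) (Fin m) ℝ} (hA : A.PosSemidef) {c : ℝ} (hc : 0 ≤ c) :
    (c • A).PosSemidef := by
  rw [posSemidef_iff_dotProduct_mulVec]
  constructor
  · ext i j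
    have := congrFun (congrFun hA.1 i) j
    simp only [conjTranspose_apply, Matrix.smul_apply, smul_eq_mul, star_trivial] at this ⊢
    rw [this]
  · intro x
    rw [smul_mulVec, dotProduct_smul, smul_eq_mul]
    exact mul_nonneg hc ((posSemidef_iff_dotProduct_mulVec.mp hA).2 x)

lemma trace_eq_sum_eigenvalues' {A : Matrix (Fin m) (Fin m) ℝ} (hA : A.IsHermitian) :
    A.trace = ∑ i, hA.eigenvalues i := by
  rw [hA.trace_eq_sum_eigenvalues]
  simp [RCLike.ofReal_real_eq_id]

lemma psd_det_nonneg {A : Matrix (Fin m) (Fin m) ℝ} (hA : A.PosSemidef) : 0 ≤ A.det := by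
  rw [hA.1.det_eq_prod_eigenvalues]
  refine Finset.prod_nonneg fun i _ => ?_
  simpa using hA.eigenvalues_nonneg i

lemma det_eq_prod_eigenvalues' {A : Matrix (Fin m) (Fin m) ℝ} (hA : A.IsHermitian) :
    A.det = ∏ i, hA.eigenvalues i := by
  rw [hA.det_eq_prod_eigenvalues]
  simp [RCLike.ofReal_real_eq_id]

lemma trace_mul_vecMulVec (B : Matrix (Fin m) (Fin m) ℝ) (u : Fin m → ℝ) :
    (B * vecMulVec u u).trace = u ⬝ᵥ B *ᵥ u := by
  simp only [trace, diag_apply, mul_apply, vecMulVec_apply, dotProduct, mulVec,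
    Finset.mul_sum]
  refine Finset.sum_congr rfl fun j _ => Finset.sum_congr rfl fun k _ => by ring

lemma trace_mul_info {N : ℕ} (f : Fin N → Fin m → ℝ) (B : Matrix (Fin m) (Fin m) ℝ)
    (w : Fin N → ℝ) :
    (B * infoMatrix f w).trace = ∑ i, w i * (f i ⬝ᵥ B *ᵥ f i) := by
  rw [infoMatrix, Finset.mul_sum, trace_sum]
  refine Finset.sum_congr rfl fun i _ => ?_
  rw [mul_smul_comm, trace_smul, trace_mul_vecMulVec, smul_eq_mul]

lemma infoMatrix_psd {N : ℕ} (f : Fin N → Fin m → ℝ) {w : Fin N → ℝ} (hw : ∀ i, 0 ≤ w i) :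
    (infoMatrix f w).PosSemidef := by
  rw [infoMatrix]
  refine Finset.sum_induction _ Matrix.PosSemidef (fun a b ha hb => ha.add hb)
    Matrix.PosSemidef.zero fun i _ => psd_smul (psd_vecMulVec (f i)) (hw i)

open scoped MatrixOrder in
lemma trace_inv_mul_ge {A C : Matrix (Fin m) (Fin m) ℝ} (hm : m ≠ 0)
    (hA : A.PosDef) (hC : C.PosSemidef) (hdet : C.det = A.det) :
    (m : ℝ) ≤ (A⁻¹ * C).trace := by
  set S := CFC.sqrt A with hSdef
  have hS : S.PosSemidef := (CFC.sqrt_nonneg A).posSemidef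
  have hSS : S * S = A := CFC.sqrt_mul_sqrt_self A hA.posSemidef.nonneg
  have hdetS2 : S.det * S.det = A.det := by rw [← det_mul, hSS]
  have hdetS : S.det ≠ 0 := by
    intro h
    rw [h, mul_zero] at hdetS2
    exact hA.det_pos.ne' hdetS2.symm
  set B := S⁻¹ * C * S⁻¹ with hBdef
  have hSinv : (S⁻¹).IsHermitian := hS.isHermitian.inv
  have hBpsd : B.PosSemidef := by
    have := hC.mul_mul_conjTranspose_same S⁻¹
    rwa [hSinv.eq] at this
  have hSinv2 : S⁻¹ * S⁻¹ = A⁻¹ := by rw [← Matrix.mul_inv_rev, hSS]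
  have htrB : B.trace = (A⁻¹ * C).trace := by
    rw [hBdef, trace_mul_cycle, hSinv2]
  have hdetSinv : (S⁻¹).det = S.det⁻¹ := by
    rw [det_nonsing_inv, Ring.inverse_eq_inv']
  have hdetB : B.det = 1 := by
    rw [hBdef, det_mul, det_mul, hdetSinv, hdet, ← hdetS2]
    field_simp
  -- eigenvalues
  set μ := hBpsd.1.eigenvalues with hμ
  have hμnn : ∀ i, 0 ≤ μ i := fun i => hBpsd.eigenvalues_nonneg i
  have hprod : ∏ i, μ i = 1 := by
    rw [← det_eq_prod_eigenvalues' hBpsd.1, hdetB]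
  have hsum : ∑ i, μ i = B.trace := (trace_eq_sum_eigenvalues' hBpsd.1).symm
  have hm' : (m : ℝ) ≠ 0 := Nat.cast_ne_zero.mpr hm
  have hamgm := Real.geom_mean_le_arith_mean_weighted Finset.univ
    (fun _ => (m : ℝ)⁻¹) μ (fun _ _ => by positivity)
    (by simp [Finset.sum_const, mul_inv_cancel₀ hm']) (fun i _ => hμnn i)
  have hlhs : ∏ i, μ i ^ ((m : ℝ)⁻¹) = 1 := by
    rw [Real.finset_prod_rpow Finset.univ μ (fun i _ => hμnn i), hprod, Real.one_rpow]
  rw [hlhs, ← Finset.mul_sum] at hamgm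
  have : (m : ℝ) ≤ ∑ i, μ i := by
    rw [← mul_le_mul_iff_of_pos_left (show (0:ℝ) < (m:ℝ)⁻¹ by positivity)]
    calc (m:ℝ)⁻¹ * (m:ℝ) = 1 := inv_mul_cancel₀ hm'
    _ ≤ (m:ℝ)⁻¹ * ∑ i, μ i := hamgm
  rw [hsum, htrB] at this
  exact this

end Aux

theorem support_reduction_exact_approx {m N : ℕ} (hm : 2 ≤ m) (hN : 2 ≤ N)
    (f : Fin N → Fin m → ℝ) (n : ℕ) (hn : m ≤ n)
    (hex : ∃ w : Fin N → ℝ, IsExactDesign n w ∧ (infoMatrix f w).det ≠ 0)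
    (wapp : Fin N → ℝ) (happ : IsDOptimalApprox f wapp)
    (happns : (infoMatrix f wapp).det ≠ 0)
    (happex : IsExactDesign n wapp)
    (hmax : (⨆ i, varfun f wapp i) = (m : ℝ)) :
    ∀ w : Fin N → ℝ, IsDOptimalExact f n w →
      ∀ ℓ : Fin N, 0 < w ℓ → varfun f wapp ℓ = (m : ℝ) := by
  intro w hw ℓ hwℓ
  have hm0 : m ≠ 0 := by omega
  have hwdes : IsDesign w := hw.1.1
  have hApsd : (infoMatrix f wapp).PosSemidef := infoMatrix_psd f happ.1.1
  have hCpsd : (infoMatrix f w).PosSemidef := infoMatrix_psd f hwdes.1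
  have hApd : (infoMatrix f wapp).PosDef := by
    refine posDef_iff_dotProduct_mulVec.mpr ⟨hApsd.1, fun x hx => lt_of_le_of_ne
      ((posSemidef_iff_dotProduct_mulVec.mp hApsd).2 x) fun h0 => ?_⟩
    exact hx (eq_zero_of_mulVec_eq_zero happns
      ((hApsd.dotProduct_mulVec_zero_iff x).mp h0.symm))
  -- Dcrit equality
  have hle1 : Dcrit (infoMatrix f w) ≤ Dcrit (infoMatrix f wapp) := happ.2 w hwdes
  have hle2 : Dcrit (infoMatrix f wapp) ≤ Dcrit (infoMatrix f w) := hw.2 wapp happex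
  have hD : Dcrit (infoMatrix f w) = Dcrit (infoMatrix f wapp) := le_antisymm hle1 hle2
  have hdet : (infoMatrix f w).det = (infoMatrix f wapp).det := by
    have h := congrArg (· ^ m) hD
    simp only [Dcrit, one_div] at h
    rwa [Real.rpow_inv_natCast_pow (psd_det_nonneg hCpsd) hm0,
      Real.rpow_inv_natCast_pow (psd_det_nonneg hApsd) hm0] at h
  have key : (m : ℝ) ≤ ((infoMatrix f wapp)⁻¹ * infoMatrix f w).trace :=
    trace_inv_mul_ge hm0 hApd hCpsd hdet
  have htr : ((infoMatrix f wapp)⁻¹ * infoMatrix f w).trace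
      = ∑ i, w i * varfun f wapp i := trace_mul_info f _ w
  have vle : ∀ i, varfun f wapp i ≤ (m : ℝ) := by
    intro i
    rw [← hmax]
    exact le_ciSup (Set.finite_range _).bddAbove i
  have hub : ∑ i, w i * varfun f wapp i ≤ (m : ℝ) := by
    calc ∑ i, w i * varfun f wapp i ≤ ∑ i, w i * (m : ℝ) :=
          Finset.sum_le_sum fun i _ => mul_le_mul_of_nonneg_left (vle i) (hwdes.1 i)
    _ = (m : ℝ) := by rw [← Finset.sum_mul, hwdes.2, one_mul]
  have hsum : ∑ i, w i * varfun f wapp i = (m : ℝ) := le_antisymm hub (htr ▸ key)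
  have hzero : ∑ i, w i * ((m : ℝ) - varfun f wapp i) = 0 := by
    simp only [mul_sub]
    rw [Finset.sum_sub_distrib, ← Finset.sum_mul, hwdes.2, one_mul, hsum, sub_self]
  have hall := (Finset.sum_eq_zero_iff_of_nonneg fun i _ =>
    mul_nonneg (hwdes.1 i) (sub_nonneg.mpr (vle i))).mp hzero ℓ (Finset.mem_univ ℓ)
  rcases mul_eq_zero.mp hall with h | h
  · exact absurd h hwℓ.ne'
  · linarith [sub_eq_zero.mp h]
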